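/- For any full-rank lattice L in R^n, any lattice vector y in L, and any s > 0, the Gaussian measure of the translated Voronoi cell satisfies exp(-pi*||y||^2/s^2) * gamma_s(V(L)) <= gamma_s(V(L) + y) <= gamma_s(V(L)). -/

import Mathlib

open scoped Real Pointwise
open MeasureTheory Set

noncomputable section

variable {E : Type*} [NormedAddCommGroup E] [InnerProductSpace ℝ E]

/-- `A` is (the point set of) a lattice of some rank `d` with determinant `v`,
computed as `sqrt (det (Bᵀ B))` for a `ℤ`-basis `b` that is `ℝ`-linearly independent. -/
def latHasDet (A : Set E) (v : ℝ) : Prop :=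
  ∃ (d : ℕ) (b : Fin d → E), LinearIndependent ℝ b ∧
    A = (Submodule.span ℤ (Set.range b) : Set E) ∧
    v = Real.sqrt (Matrix.det (Matrix.of fun i j : Fin d => (inner ℝ (b i) (b j) : ℝ)))

/-- `L` is a lattice of rank `d` : it is generated over `ℤ` by `d` 
`ℝ`-linearly independent vectors. -/
def IsLatticeOfRank (L : Submodule ℤ E) (d : ℕ) : Prop :=
  ∃ b : Fin d → E, LinearIndependent ℝ b ∧ L = Submodule.span ℤ (Set.range b)

/-- Gaussian mass of a set `A` with parameter `s`. -/
def rhoS (s : ℝ) (A : Set E) : ℝ := ∑' x : A, Real.exp (-π * ‖(x : E)‖ ^ 2 / s ^ 2)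

/-- A lattice (given by its point set) is stable if it has determinant one and every
sublattice has determinant at least one. -/
def IsStable (A : Set E) : Prop :=
  latHasDet A 1 ∧
    ∀ M : Submodule ℤ E, (M : Set E) ⊆ A → ∀ v, latHasDet (M : Set E) v → 1 ≤ v

/-- The Voronoi cell of a lattice. -/
def voronoi (L : Submodule ℤ E) : Set E := {x | ∀ y ∈ L, ‖x‖ ≤ ‖y - x‖}

/-- The covering radius of a lattice: the furthest distance from a point of the span
of the lattice to the lattice. -/
def covRad (L : Submodule ℤ E) : ℝ :=
  ⨆ t : Submodule.span ℝ (L : Set E), ⨅ y : L, ‖(t : E) - (y : E)‖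

/-- The dual lattice, as a set. -/
def dualSet (L : Submodule ℤ E) : Set E :=
  {w | ∀ y ∈ L, ∃ k : ℤ, (inner ℝ w y : ℝ) = (k : ℝ)}

/-- The Gaussian measure of `S/s`. -/
def gauss {n : ℕ} (s : ℝ) (S : Set (EuclideanSpace ℝ (Fin n))) : ℝ :=
  ∫ x in s⁻¹ • S, Real.exp (-π * ‖x‖ ^ 2)

/-- A fundamental body for a lattice with point set `L`: a convex body `K` such that
`K + L` tiles space, i.e. `vol K = det L` and the interior of `K` is disjoint from every
nontrivial lattice translate of `K`. -/
def IsFundBody {n : ℕ} (L : Set (EuclideanSpace ℝ (Fin n)))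
    (K : Set (EuclideanSpace ℝ (Fin n))) : Prop :=
  Convex ℝ K ∧ IsCompact K ∧ (interior K).Nonempty ∧
    (∀ y ∈ L, y ≠ 0 → interior K ∩ ((fun x => x + y) '' K) = ∅) ∧
    ∀ v, latHasDet L v → volume K = ENNReal.ofReal v

/-- Concatenation of Euclidean vectors. -/
def appendE {n m : ℕ} (x : EuclideanSpace ℝ (Fin n)) (y : EuclideanSpace ℝ (Fin m)) :
    EuclideanSpace ℝ (Fin (n + m)) :=
  WithLp.toLp 2 (fun i => Fin.addCases (motive := fun _ => ℝ) (fun j => x j) (fun j => y j) i)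

/-! Write `V = voronoi L` and `ρ(x) = exp(-π‖x‖²)`. Rescaling by `s⁻¹` turns `gauss s (V + y)`
into `∫_W ρ(x + c)` with `W = s⁻¹ • V` and `c = s⁻¹ • y`. Every point of `W` is at least as close
to `0` as to `-c`, so `ρ(x + c) ≤ ρ(x)` on `W`. For the lower bound, `W = -W` gives
`∫_W ρ(x + c) = ½ ∫_W (ρ(x + c) + ρ(x - c))`, and AM–GM together with the parallelogram law
gives `ρ(x + c) + ρ(x - c) ≥ 2 ρ(c) ρ(x)`. -/

section

open Real

lemma two_mul_exp_add_div_two_le (a b : ℝ) : 2 * exp ((a + b) / 2) ≤ exp a + exp b := by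
  have h := two_mul_le_add_sq (exp (a / 2)) (exp (b / 2))
  rwa [mul_assoc, ← exp_add, ← add_div, ← exp_nat_mul, ← exp_nat_mul, Nat.cast_ofNat,
    mul_div_cancel₀ _ two_ne_zero, mul_div_cancel₀ _ two_ne_zero] at h

lemma setIntegral_comp_neg_of_neg_eq {G F : Type*} [MeasurableSpace G] [InvolutiveNeg G]
    [MeasurableNeg G] [NormedAddCommGroup F] [NormedSpace ℝ F] {μ : Measure G}
    [μ.IsNegInvariant] {W : Set G} (hW : -W = W) (f : G → F) :
    ∫ x in W, f (-x) ∂μ = ∫ x in W, f x ∂μ := by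
  conv_rhs => rw [← hW, ← Set.image_neg_eq_neg]
  exact ((Measure.measurePreserving_neg μ).setIntegral_image_emb measurableEmbedding_neg f W).symm

section Gaussian

lemma two_mul_exp_neg_pi_norm_sq_mul_le (x c : E) :
    2 * (exp (-π * ‖c‖ ^ 2) * exp (-π * ‖x‖ ^ 2)) ≤
      exp (-π * ‖x + c‖ ^ 2) + exp (-π * ‖x - c‖ ^ 2) := by
  calc 2 * (exp (-π * ‖c‖ ^ 2) * exp (-π * ‖x‖ ^ 2))
      = 2 * exp ((-π * ‖x + c‖ ^ 2 + -π * ‖x - c‖ ^ 2) / 2) := by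
        rw [← exp_add]
        congr 2
        linear_combination (π / 2) * parallelogram_law_with_norm ℝ x c
    _ ≤ exp (-π * ‖x + c‖ ^ 2) + exp (-π * ‖x - c‖ ^ 2) := two_mul_exp_add_div_two_le _ _

variable [FiniteDimensional ℝ E] [MeasurableSpace E] [BorelSpace E]

lemma integrable_exp_neg_pi_norm_sq : Integrable (fun x : E => exp (-π * ‖x‖ ^ 2)) := by
  have h := GaussianFourier.integrable_cexp_neg_mul_sq_norm_add (V := E) (b := (π : ℂ))
    (by simpa using pi_pos) 0 0
  refine h.norm.congr (Filter.Eventually.of_forall fun x => ?_)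
  simp [Complex.norm_exp, ← Complex.ofReal_pow]

lemma integrable_exp_neg_pi_norm_add_sq (c : E) :
    Integrable (fun x : E => exp (-π * ‖x + c‖ ^ 2)) :=
  integrable_exp_neg_pi_norm_sq.comp_add_right c

lemma setIntegral_exp_neg_pi_norm_add_sq_le {W : Set E} (hW : MeasurableSet W) {c : E}
    (hc : ∀ x ∈ W, ‖x‖ ≤ ‖x + c‖) :
    ∫ x in W, exp (-π * ‖x + c‖ ^ 2) ≤ ∫ x in W, exp (-π * ‖x‖ ^ 2) := by
  refine setIntegral_mono_on (integrable_exp_neg_pi_norm_add_sq c).integrableOn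
    integrable_exp_neg_pi_norm_sq.integrableOn hW fun x hx => ?_
  have hsq := pow_le_pow_left₀ (norm_nonneg x) (hc x hx) 2
  exact exp_le_exp.2 (mul_le_mul_of_nonpos_left hsq (neg_nonpos.2 pi_pos.le))

lemma exp_neg_pi_norm_sq_mul_setIntegral_le {W : Set E} (hW : -W = W) (c : E) :
    exp (-π * ‖c‖ ^ 2) * ∫ x in W, exp (-π * ‖x‖ ^ 2) ≤ ∫ x in W, exp (-π * ‖x + c‖ ^ 2) := by
  have hflip : ∫ x in W, exp (-π * ‖x - c‖ ^ 2) = ∫ x in W, exp (-π * ‖x + c‖ ^ 2) := by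
    rw [← setIntegral_comp_neg_of_neg_eq hW]
    simp_rw [← norm_neg (-_ - c), neg_sub, sub_neg_eq_add, add_comm c]
  have hsub : Integrable (fun x : E => exp (-π * ‖x - c‖ ^ 2)) := by
    simpa [sub_eq_add_neg] using integrable_exp_neg_pi_norm_add_sq (-c)
  have key : 2 * (exp (-π * ‖c‖ ^ 2) * ∫ x in W, exp (-π * ‖x‖ ^ 2)) ≤
      ∫ x in W, (exp (-π * ‖x + c‖ ^ 2) + exp (-π * ‖x - c‖ ^ 2)) := by
    rw [← integral_const_mul, ← integral_const_mul]
    exact integral_mono ((integrable_exp_neg_pi_norm_sq.integrableOn.const_mul _).const_mul _)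
      ((integrable_exp_neg_pi_norm_add_sq c).integrableOn.add hsub.integrableOn)
      fun x => two_mul_exp_neg_pi_norm_sq_mul_le x c
  rw [integral_add (integrable_exp_neg_pi_norm_add_sq c).integrableOn hsub.integrableOn,
    hflip] at key
  linarith

end Gaussian

section Voronoi

variable {G : Type*} [NormedAddCommGroup G]

lemma isClosed_voronoi (L : Submodule ℤ G) : IsClosed (voronoi L) := by
  simp only [voronoi, Set.ofPred_forall]
  exact isClosed_biInter fun y _ => isClosed_le continuous_norm (by fun_prop)

lemma neg_voronoi (L : Submodule ℤ G) : -voronoi L = voronoi L := by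
  ext x
  simp only [Set.mem_neg, voronoi, Set.mem_ofPred_eq, norm_neg]
  refine ⟨fun h y hy => ?_, fun h y hy => ?_⟩ <;>
  · convert h (-y) (neg_mem hy) using 1
    rw [← norm_neg]
    abel_nf

lemma norm_le_norm_add_smul_of_mem_smul_voronoi [NormedSpace ℝ G] {L : Submodule ℤ G} {a : ℝ}
    {x y : G} (hx : x ∈ a • voronoi L) (hy : y ∈ L) : ‖x‖ ≤ ‖x + a • y‖ := by
  obtain ⟨v, hv, rfl⟩ := hx
  have hvy := hv (-y) (neg_mem hy)
  rw [show -y - v = -(v + y) by abel, norm_neg] at hvy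
  rw [← smul_add, norm_smul, norm_smul]
  gcongr

end Voronoi

end

theorem gauss_translated_voronoi_general {n : ℕ}
    (L : Submodule ℤ (EuclideanSpace ℝ (Fin n)))
    (y : EuclideanSpace ℝ (Fin n)) (hy : y ∈ L) (s : ℝ) (hs : 0 < s) :
    Real.exp (-π * ‖y‖ ^ 2 / s ^ 2) * gauss s (voronoi L) ≤
        gauss s ((fun x => x + y) '' voronoi L) ∧
      gauss s ((fun x => x + y) '' voronoi L) ≤ gauss s (voronoi L) := by
  set W := s⁻¹ • voronoi L
  have hW : MeasurableSet W :=
    ((isClosed_voronoi L).smul_of_ne_zero (inv_ne_zero hs.ne')).measurableSet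
  have hWneg : -W = W := by rw [← Set.smul_set_neg, neg_voronoi]
  have htranslate : gauss s ((fun x => x + y) '' voronoi L) =
      ∫ x in W, Real.exp (-π * ‖x + s⁻¹ • y‖ ^ 2) := by
    rw [gauss, ← (measurePreserving_add_right volume (s⁻¹ • y)).setIntegral_image_emb
      (measurableEmbedding_addRight _) (fun x => Real.exp (-π * ‖x‖ ^ 2)) W]
    simp only [W, ← Set.image_smul, Set.image_image, smul_add]
  have hscale : -π * ‖y‖ ^ 2 / s ^ 2 = -π * ‖s⁻¹ • y‖ ^ 2 := by
    rw [norm_smul, norm_inv, Real.norm_of_nonneg hs.le]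
    ring
  rw [htranslate, hscale]
  exact ⟨exp_neg_pi_norm_sq_mul_setIntegral_le hWneg _,
    setIntegral_exp_neg_pi_norm_add_sq_le hW fun x hx =>
      norm_le_norm_add_smul_of_mem_smul_voronoi hx hy⟩

/-- Gaussian measure of the translated Voronoi cell. -/
theorem gauss_translated_voronoi {n : ℕ}
    (L : Submodule ℤ (EuclideanSpace ℝ (Fin n))) (hL : IsLatticeOfRank L n)
    (y : EuclideanSpace ℝ (Fin n)) (hy : y ∈ L) (s : ℝ) (hs : 0 < s) :
    Real.exp (-π * ‖y‖ ^ 2 / s ^ 2) * gauss s (voronoi L) ≤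
        gauss s ((fun x => x + y) '' voronoi L) ∧
      gauss s ((fun x => x + y) '' voronoi L) ≤ gauss s (voronoi L) :=
  gauss_translated_voronoi_general L y hy s hs
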